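/- For every n ≥ 6, the dual Löbell graph of degree n admits a legal system. -/
import Mathlib


open SimpleGraph

/-- A state `S` of a graph is *legal* if both `S` and its complement induce
nonempty connected subgraphs. -/
def Legal {V : Type*} (G : SimpleGraph V) (S : Set V) : Prop :=
  S.Nonempty ∧ Sᶜ.Nonempty ∧ (G.induce S).Connected ∧ (G.induce Sᶜ).Connected

/-- A state is *strongly legal* if it is legal and moreover every vertex of `S`
is adjacent to a vertex of the complement and vice versa. -/
def StronglyLegal {V : Type*} (G : SimpleGraph V) (S : Set V) : Prop :=
  Legal G S ∧ (∀ v ∈ S, ∃ u ∈ Sᶜ, G.Adj v u) ∧ (∀ u ∈ Sᶜ, ∃ v ∈ S, G.Adj u v)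

/-- A *system of moves*: each `m v` contains `v` and no neighbour of `v`. -/
def IsMoveSystem {V : Type*} (G : SimpleGraph V) (m : V → Set V) : Prop :=
  ∀ v, v ∈ m v ∧ ∀ u, G.Adj u v → u ∉ m v

/-- Reachability of states under the group generated by the moves, acting by
symmetric difference. -/
def Reach {V : Type*} (m : V → Set V) : Set V → Set V → Prop :=
  Relation.ReflTransGen fun T T' => ∃ v, T' = symmDiff (m v) T

/-- The orbit of `S` under the moves is a *legal orbit*: all its states are legal. -/
def IsLegalOrbit {V : Type*} (G : SimpleGraph V) (m : V → Set V) (S : Set V) : Prop :=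
  ∀ T, Reach m S T → Legal G T

/-- `Γ` has a *legal system* if some system of moves admits a legal orbit. -/
def HasLegalSystem {V : Type*} (G : SimpleGraph V) : Prop :=
  ∃ (m : V → Set V) (S : Set V), IsMoveSystem G m ∧ IsLegalOrbit G m S

/-- The dual Löbell graph of degree `n`: two apexes `v* = inl true`,
`w* = inl false`, and two `n`-cycles `vᵢ = inr (true, i)`, `wᵢ = inr (false, i)`
adjacent to their respective apexes, with `wᵢ` adjacent to `v_{i−2}` and
`v_{i−1}` (indices mod `n`). -/
def dualLobell (n : ℕ) : SimpleGraph (Bool ⊕ Bool × ZMod n) :=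
  SimpleGraph.fromRel fun x y =>
    match x, y with
    | .inl b, .inr (c, _) => b = c
    | .inr (b, i), .inr (c, j) =>
        (b = c ∧ j = i + 1) ∨ (b = false ∧ c = true ∧ (j = i - 2 ∨ j = i - 1))
    | _, _ => False

namespace DLaux

variable (n : ℕ)

/-- membership predicate for the basic one-per-pair states -/
def st (b : Bool) (f : ZMod n → Bool) : Set (Bool ⊕ Bool × ZMod n) :=
  {x | match x with
       | .inl c => c = b
       | .inr (c, i) => f i = c}

@[simp] lemma mem_st_inl {b c : Bool} {f : ZMod n → Bool} :
    (Sum.inl c ∈ st n b f) ↔ c = b := Iff.rfl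

@[simp] lemma mem_st_inr {b c : Bool} {f : ZMod n → Bool} {i : ZMod n} :
    (Sum.inr (c, i) ∈ st n b f) ↔ f i = c := Iff.rfl

def fS : ZMod n → Bool := fun i => !(decide (i = 1))

def mA : Set (Bool ⊕ Bool × ZMod n) :=
  {x | match x with | .inl _ => True | .inr _ => False}

def mQ (i : ZMod n) : Set (Bool ⊕ Bool × ZMod n) :=
  {x | match x with | .inl _ => False | .inr (_, j) => j = i ∨ j = i + 3}

@[simp] lemma mem_mA_inl {c : Bool} : (Sum.inl c ∈ mA n) ↔ True := Iff.rfl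
@[simp] lemma mem_mA_inr {c : Bool} {i : ZMod n} :
    (Sum.inr (c, i) ∈ mA n) ↔ False := Iff.rfl
@[simp] lemma mem_mQ_inl {c : Bool} {i : ZMod n} : (Sum.inl c ∈ mQ n i) ↔ False := Iff.rfl
@[simp] lemma mem_mQ_inr {c : Bool} {i j : ZMod n} :
    (Sum.inr (c, j) ∈ mQ n i) ↔ (j = i ∨ j = i + 3) := Iff.rfl

def sg (j : ZMod n) : ZMod n :=
  if 3 ∣ n then j else if j = 6 ∨ j = -3 then j - 3 else j

def mv : (Bool ⊕ Bool × ZMod n) → Set (Bool ⊕ Bool × ZMod n)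
  | .inl _ => mA n
  | .inr (_, j) => mQ n (sg n j)

def flip2 (i : ZMod n) (f : ZMod n → Bool) : ZMod n → Bool :=
  fun j => if j = i ∨ j = i + 3 then !(f j) else f j

def χ (b : Bool) : ZMod 2 := if b then 1 else 0

end DLaux

namespace DLaux
variable (n : ℕ)

lemma cast_eq_zero_iff (a : ℕ) : ((a : ZMod n) = 0) ↔ n ∣ a :=
  ZMod.natCast_eq_zero_iff a n

lemma cast_ne_zero_of (a : ℕ) (ha : a ≠ 0) (h : a < n) : ((a : ZMod n) : ZMod n) ≠ 0 := by
  intro h0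
  rw [cast_eq_zero_iff] at h0
  exact absurd (Nat.le_of_dvd (Nat.pos_of_ne_zero ha) h0) (by omega)

variable {n}

lemma czero (hn : 6 ≤ n) : ∀ a : ℕ, a ≠ 0 → a < 6 → ((a : ZMod n) : ZMod n) ≠ 0 := by
  intro a h1 h2
  exact cast_ne_zero_of n a h1 (by omega)

lemma one_ne : (6 ≤ n) → ((1 : ZMod n) ≠ 0) := fun hn => by
  have := czero hn 1 (by norm_num) (by norm_num); simpa using this

lemma two_ne : (6 ≤ n) → ((2 : ZMod n) ≠ 0) := fun hn => by
  have := czero hn 2 (by norm_num) (by norm_num); simpa using this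

lemma three_ne : (6 ≤ n) → ((3 : ZMod n) ≠ 0) := fun hn => by
  have := czero hn 3 (by norm_num) (by norm_num); simpa using this

lemma four_ne : (6 ≤ n) → ((4 : ZMod n) ≠ 0) := fun hn => by
  have := czero hn 4 (by norm_num) (by norm_num); simpa using this

lemma five_ne : (6 ≤ n) → ((5 : ZMod n) ≠ 0) := fun hn => by
  have := czero hn 5 (by norm_num) (by norm_num); simpa using this

end DLaux



namespace DLaux
variable {n : ℕ}

lemma adj_apex_ring (b : Bool) (i : ZMod n) :
    (dualLobell n).Adj (Sum.inl b) (Sum.inr (b, i)) := by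
  refine ⟨by simp, Or.inl ?_⟩
  rfl

lemma adj_ring_succ (hn : 6 ≤ n) (b : Bool) (i : ZMod n) :
    (dualLobell n).Adj (Sum.inr (b, i)) (Sum.inr (b, i + 1)) := by
  refine ⟨?_, Or.inl (Or.inl ⟨rfl, rfl⟩)⟩
  simp only [ne_eq, Sum.inr.injEq, Prod.mk.injEq]
  rintro ⟨-, h⟩
  exact one_ne hn (by linear_combination -h)

lemma adj_w_v_pred (hn : 6 ≤ n) (i : ZMod n) :
    (dualLobell n).Adj (Sum.inr (false, i)) (Sum.inr (true, i - 1)) := by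
  refine ⟨by simp, Or.inl (Or.inr ⟨rfl, rfl, Or.inr rfl⟩)⟩

lemma adj_no_apex (b c : Bool) : ¬ (dualLobell n).Adj (Sum.inl b) (Sum.inl c) := by
  rintro ⟨hne, h | h⟩ <;> exact h

end DLaux

namespace DLaux
variable {n : ℕ}

lemma symmDiff_mA (b : Bool) (f : ZMod n → Bool) :
    symmDiff (mA n) (st n b f) = st n (!b) f := by
  ext x
  rw [Set.mem_symmDiff]
  match x with
  | .inl c =>
      simp only [mem_mA_inl, mem_st_inl, true_and, and_true]
      cases c <;> cases b <;> simp
  | .inr (c, i) =>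
      simp only [mem_mA_inr, mem_st_inr, false_and, false_or, not_false_eq_true, and_true]

lemma symmDiff_mQ (q : ZMod n) (b : Bool) (f : ZMod n → Bool) :
    symmDiff (mQ n q) (st n b f) = st n b (flip2 n q f) := by
  ext x
  rw [Set.mem_symmDiff]
  match x with
  | .inl c =>
      simp only [mem_mQ_inl, mem_st_inl, false_and, false_or, not_false_eq_true, and_true]
  | .inr (c, i) =>
      simp only [mem_mQ_inr, mem_st_inr, flip2]
      by_cases h : i = q ∨ i = q + 3
      · simp only [h, if_true, true_and, not_true_eq_false, and_false, or_false]
        cases (f i) <;> cases c <;> simp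
      · simp only [h, false_and, false_or, not_false_eq_true, and_true, if_false]

lemma compl_st (b : Bool) (f : ZMod n → Bool) :
    (st n b f)ᶜ = st n (!b) (fun i => !(f i)) := by
  ext x
  match x with
  | .inl c =>
      simp only [Set.mem_compl_iff, mem_st_inl]
      cases c <;> cases b <;> simp
  | .inr (c, i) =>
      simp only [Set.mem_compl_iff, mem_st_inr]
      cases (f i) <;> cases c <;> simp

end DLaux

namespace DLaux

lemma z2_add_self (a : ZMod 2) : a + a = 0 := by fin_cases a <;> decide

section Inv
variable (n : ℕ) [NeZero n]

def ψ (f : ZMod n → Bool) : ZMod 2 := ∑ i : ZMod n, χ (f i)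

def aX : ℕ := if (n / 3) % 2 = 0 then 1 else 0

def Xs : Finset (ZMod n) :=
  if 3 ∣ n then (Finset.range (n / 3)).image (fun t => ((3 * t + aX n : ℕ) : ZMod n))
  else {(0 : ZMod n), 3, 6}

def Φ (f : ZMod n → Bool) : ZMod 2 := ∑ i ∈ Xs n, χ (f i)

variable {n}

lemma chi_flip2 (q : ZMod n) (f : ZMod n → Bool) (j : ZMod n) :
    χ (flip2 n q f j) = χ (f j) + (if j = q ∨ j = q + 3 then (1 : ZMod 2) else 0) := by
  unfold flip2
  by_cases h : j = q ∨ j = q + 3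
  · rw [if_pos h, if_pos h]; cases (f j) <;> simp [χ] <;> decide
  · rw [if_neg h, if_neg h, add_zero]

lemma sum_pair (s : Finset (ZMod n)) (a b : ZMod n) (hab : a ≠ b) :
    (∑ j ∈ s, (if j = a ∨ j = b then (1 : ZMod 2) else 0))
      = (if a ∈ s then (1 : ZMod 2) else 0) + (if b ∈ s then (1 : ZMod 2) else 0) := by
  have : ∀ j ∈ s, (if j = a ∨ j = b then (1 : ZMod 2) else 0)
      = (if j = a then (1 : ZMod 2) else 0) + (if j = b then (1 : ZMod 2) else 0) := by
    intro j _
    by_cases h1 : j = a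
    · subst h1
      simp [hab]
    · by_cases h2 : j = b
      · rw [if_pos (Or.inr h2), if_neg h1, if_pos h2, zero_add]
      · rw [if_neg (by tauto), if_neg h1, if_neg h2, zero_add]
  rw [Finset.sum_congr rfl this, Finset.sum_add_distrib,
    Finset.sum_ite_eq' s a (fun _ => (1 : ZMod 2)), Finset.sum_ite_eq' s b (fun _ => (1 : ZMod 2))]

omit [NeZero n] in
lemma self_ne_add_three (hn : 6 ≤ n) (q : ZMod n) : q ≠ q + 3 := by
  intro h
  exact three_ne hn (by linear_combination -h)

lemma psi_flip2 (hn : 6 ≤ n) (q : ZMod n) (f : ZMod n → Bool) :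
    ψ n (flip2 n q f) = ψ n f := by
  unfold ψ
  rw [Finset.sum_congr rfl (fun j _ => chi_flip2 q f j), Finset.sum_add_distrib,
    sum_pair _ _ _ (self_ne_add_three hn q)]
  simp [z2_add_self]

lemma phi_flip2 (q : ZMod n) (f : ZMod n → Bool)
    (hq : (q ∈ Xs n ↔ q + 3 ∈ Xs n)) (hne : q ≠ q + 3) :
    Φ n (flip2 n q f) = Φ n f := by
  unfold Φ
  rw [Finset.sum_congr rfl (fun j _ => chi_flip2 q f j), Finset.sum_add_distrib,
    sum_pair _ _ _ hne]
  by_cases h : q ∈ Xs n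
  · rw [if_pos h, if_pos (hq.1 h)]; simp [z2_add_self]
  · rw [if_neg h, if_neg (fun hc => h (hq.2 hc))]; simp

end Inv
end DLaux

namespace DLaux
section Inv2
variable {n : ℕ} [NeZero n]

lemma cast3 : ((3 : ZMod n)) = ((3 : ℕ) : ZMod n) := by norm_cast

lemma val3 (hn : 6 ≤ n) : (3 : ZMod n).val = 3 := by
  rw [cast3, ZMod.val_cast_of_lt (by omega)]

lemma val_add_three (hn : 6 ≤ n) (q : ZMod n) : (q + 3).val = (q.val + 3) % n := by
  rw [ZMod.val_add, val3 hn]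

lemma aX_le : aX n ≤ 1 := by unfold aX; split_ifs <;> omega

lemma mem_Xs_div (h3 : 3 ∣ n) (hn : 6 ≤ n) (i : ZMod n) :
    i ∈ Xs n ↔ i.val % 3 = aX n := by
  have hn3 : n = 3 * (n / 3) := (Nat.mul_div_cancel' h3).symm
  unfold Xs
  rw [if_pos h3]
  simp only [Finset.mem_image, Finset.mem_range]
  constructor
  · rintro ⟨t, ht, rfl⟩
    have hlt : 3 * t + aX n < n := by have := aX_le (n := n); omega
    rw [ZMod.val_cast_of_lt hlt]
    have := aX_le (n := n); omega
  · intro h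
    refine ⟨i.val / 3, ?_, ?_⟩
    · have := i.val_lt; have := aX_le (n := n); omega
    · have : 3 * (i.val / 3) + aX n = i.val := by have := aX_le (n := n); omega
      rw [this, ZMod.natCast_zmod_val]

lemma valmod_add_three (h3 : 3 ∣ n) (hn : 6 ≤ n) (q : ZMod n) :
    (q + 3).val % 3 = q.val % 3 := by
  rw [val_add_three hn, Nat.mod_mod_of_dvd _ h3, Nat.add_mod_right]

lemma mem_Xs_not (h3 : ¬ 3 ∣ n) (i : ZMod n) :
    i ∈ Xs n ↔ (i = 0 ∨ i = 3 ∨ i = 6) := by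
  unfold Xs
  rw [if_neg h3]
  simp [Finset.mem_insert]

lemma cast_ne' (hn : 6 ≤ n) {a b : ℕ} (ha : a < n) (hb : b < n) (hab : a ≠ b) :
    ((a : ZMod n)) ≠ ((b : ZMod n)) := by
  intro h
  rw [← ZMod.val_cast_of_lt ha, ← ZMod.val_cast_of_lt hb, h] at hab
  exact hab rfl

lemma six_cast : ((6 : ZMod n)) = ((6 : ℕ) : ZMod n) := by norm_cast
lemma zero_cast : ((0 : ZMod n)) = ((0 : ℕ) : ZMod n) := by norm_cast

lemma phi_hq_not3 (hn : 6 ≤ n) (h3 : ¬ 3 ∣ n) (q : ZMod n)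
    (hq6 : q ≠ 6) (hqm3 : q ≠ -3) : (q ∈ Xs n ↔ q + 3 ∈ Xs n) := by
  have hn7 : 7 ≤ n := by
    rcases Nat.lt_or_ge n 7 with h | h
    · interval_cases n <;> omega
    · exact h
  have h36 : (3 : ZMod n) + 3 = 6 := by norm_num
  rw [mem_Xs_not h3, mem_Xs_not h3]
  constructor
  · rintro (rfl | rfl | rfl)
    · right; left; rw [zero_add]
    · right; right; rw [h36]
    · exact absurd rfl hq6
  · rintro (h | h | h)
    · exact absurd (by linear_combination h) hqm3
    · left; linear_combination h
    · right; left; linear_combination h - h36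
end Inv2
end DLaux

namespace DLaux
section SG
variable {n : ℕ} [NeZero n]

omit [NeZero n] in
lemma sg_cases (j : ZMod n) : j = sg n j ∨ j = sg n j + 3 := by
  unfold sg
  split_ifs with h1 h2
  · exact Or.inl rfl
  · right; ring
  · exact Or.inl rfl

omit [NeZero n] in
lemma sg_good (hn : 6 ≤ n) (h3 : ¬ 3 ∣ n) (j : ZMod n) :
    sg n j ≠ 6 ∧ sg n j ≠ -3 := by
  have hn7 : 7 ≤ n := by
    rcases Nat.lt_or_ge n 7 with h | h
    · interval_cases n <;> omega
    · exact h
  have h6ne0 : (6 : ZMod n) ≠ 0 := by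
    have := cast_ne_zero_of n 6 (by norm_num) (by omega); simpa using this
  have h3ne0 : (3 : ZMod n) ≠ 0 := three_ne hn
  have h12 : (12 : ZMod n) ≠ 0 := by
    intro h
    have : ((12 : ℕ) : ZMod n) = 0 := by norm_cast
    rw [cast_eq_zero_iff] at this
    have hle : n ≤ 12 := Nat.le_of_dvd (by norm_num) this
    interval_cases n <;> omega
  unfold sg
  rw [if_neg h3]
  split_ifs with h2
  · rcases h2 with rfl | rfl
    · constructor
      · intro h; exact h3ne0 (by linear_combination -h)
      · intro h; exact h6ne0 (by linear_combination h)
    · constructor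
      · intro h; exact h12 (by linear_combination -h)
      · intro h; exact h3ne0 (by linear_combination -h)
  · push_neg at h2
    exact h2

lemma phi_sg_flip2 (hn : 6 ≤ n) (j : ZMod n) (f : ZMod n → Bool) :
    Φ n (flip2 n (sg n j) f) = Φ n f := by
  apply phi_flip2 _ _ ?_ (self_ne_add_three hn _)
  by_cases h3 : 3 ∣ n
  · rw [mem_Xs_div h3 hn, mem_Xs_div h3 hn, valmod_add_three h3 hn]
  · exact phi_hq_not3 hn h3 _ (sg_good hn h3 j).1 (sg_good hn h3 j).2

end SG
end DLaux

namespace DLaux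
section Vals
variable {n : ℕ} [NeZero n]

lemma nat_cast_zmod2 (x : ℕ) (h : x % 2 = 1) : ((x : ℕ) : ZMod 2) = 1 := by
  rw [← ZMod.natCast_mod, h]; norm_cast

lemma nat_cast_zmod2' (x : ℕ) (h : x % 2 = 0) : ((x : ℕ) : ZMod 2) = 0 := by
  rw [← ZMod.natCast_mod, h]; norm_cast

lemma sum_const_range (m : ℕ) : (∑ _t ∈ Finset.range m, (1 : ZMod 2)) = ((m : ℕ) : ZMod 2) := by
  rw [Finset.sum_const, Finset.card_range, nsmul_eq_mul, mul_one]

lemma phi_fS (hn : 6 ≤ n) : Φ n (fS n) = 1 := by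
  have hchi : ∀ i : ZMod n, χ (fS n i) = if i = 1 then 0 else 1 := by
    intro i
    unfold fS χ
    by_cases h : i = 1 <;> simp [h]
  by_cases h3 : 3 ∣ n
  · have hn3 : n = 3 * (n / 3) := (Nat.mul_div_cancel' h3).symm
    have hax := aX_le (n := n)
    have hlt : ∀ t ∈ Finset.range (n / 3), 3 * t + aX n < n := by
      intro t ht; rw [Finset.mem_range] at ht; omega
    have hinj : ∀ t ∈ Finset.range (n / 3), ∀ s ∈ Finset.range (n / 3),
        ((3 * t + aX n : ℕ) : ZMod n) = ((3 * s + aX n : ℕ) : ZMod n) → t = s := by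
      intro t ht s hs h
      have := congrArg ZMod.val h
      rw [ZMod.val_cast_of_lt (hlt t ht), ZMod.val_cast_of_lt (hlt s hs)] at this
      omega
    unfold Φ Xs
    rw [if_pos h3, Finset.sum_image hinj]
    have hone : (1 : ZMod n).val = 1 := by
      rw [show ((1 : ZMod n)) = ((1 : ℕ) : ZMod n) by norm_cast, ZMod.val_cast_of_lt (by omega)]
    have hterm : ∀ t ∈ Finset.range (n / 3),
        χ (fS n (((3 * t + aX n : ℕ) : ZMod n))) =
          1 + (if t = 0 ∧ aX n = 1 then 1 else 0) := by
      intro t ht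
      rw [hchi]
      by_cases he : ((3 * t + aX n : ℕ) : ZMod n) = 1
      · have := congrArg ZMod.val he
        rw [ZMod.val_cast_of_lt (hlt t ht), hone] at this
        have ht0 : t = 0 ∧ aX n = 1 := by omega
        rw [if_pos he, if_pos ht0]; decide
      · have hne : ¬ (t = 0 ∧ aX n = 1) := by
          rintro ⟨rfl, ha⟩
          apply he
          have hx : (3 * 0 + aX n : ℕ) = 1 := by omega
          rw [hx]
          norm_cast
        rw [if_neg he, if_neg hne, add_zero]
    rw [Finset.sum_congr rfl hterm, Finset.sum_add_distrib, sum_const_range]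
    by_cases hpar : (n / 3) % 2 = 0
    · have ha1 : aX n = 1 := by unfold aX; rw [if_pos hpar]
      have : ∀ t ∈ Finset.range (n/3), (if t = 0 ∧ aX n = 1 then (1:ZMod 2) else 0)
          = (if t = 0 then 1 else 0) := by
        intro t _; by_cases h : t = 0 <;> simp [h, ha1]
      rw [Finset.sum_congr rfl this, Finset.sum_ite_eq' (Finset.range (n/3)) 0 (fun _ => (1:ZMod 2)),
        if_pos (Finset.mem_range.2 (by omega)), nat_cast_zmod2' _ hpar, zero_add]
    · have ha0 : aX n = 0 := by unfold aX; rw [if_neg hpar]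
      have : ∀ t ∈ Finset.range (n/3), (if t = 0 ∧ aX n = 1 then (1:ZMod 2) else 0)
          = 0 := by
        intro t _
        rw [if_neg]; rintro ⟨-, h⟩; omega
      rw [Finset.sum_congr rfl this, Finset.sum_const, smul_zero, add_zero,
        nat_cast_zmod2 _ (by omega)]
  · have hn7 : 7 ≤ n := by
      rcases Nat.lt_or_ge n 7 with h | h
      · interval_cases n <;> omega
      · exact h
    unfold Φ Xs
    rw [if_neg h3]
    have d1 : ((0 : ZMod n)) ∉ ({(3 : ZMod n), 6} : Finset (ZMod n)) := by
      simp only [Finset.mem_insert, Finset.mem_singleton]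
      push_neg
      constructor
      · rw [zero_cast, cast3]; exact cast_ne' hn (by omega) (by omega) (by omega)
      · rw [zero_cast, six_cast]; exact cast_ne' hn (by omega) (by omega) (by omega)
    have d2 : ((3 : ZMod n)) ∉ ({(6 : ZMod n)} : Finset (ZMod n)) := by
      simp only [Finset.mem_singleton]
      rw [cast3, six_cast]; exact cast_ne' hn (by omega) (by omega) (by omega)
    rw [Finset.sum_insert d1, Finset.sum_insert d2, Finset.sum_singleton]
    have e0 : χ (fS n 0) = 1 := by
      rw [hchi, if_neg]
      rw [zero_cast, show ((1:ZMod n)) = ((1:ℕ) : ZMod n) by norm_cast]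
      exact cast_ne' hn (by omega) (by omega) (by omega)
    have e3 : χ (fS n 3) = 1 := by
      rw [hchi, if_neg]
      rw [cast3, show ((1:ZMod n)) = ((1:ℕ) : ZMod n) by norm_cast]
      exact cast_ne' hn (by omega) (by omega) (by omega)
    have e6 : χ (fS n 6) = 1 := by
      rw [hchi, if_neg]
      rw [six_cast, show ((1:ZMod n)) = ((1:ℕ) : ZMod n) by norm_cast]
      exact cast_ne' hn (by omega) (by omega) (by omega)
    rw [e0, e3, e6]
    decide

lemma psi_fS : ψ n (fS n) = ((n : ℕ) : ZMod 2) + 1 := by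
  have hchi : ∀ i : ZMod n, χ (fS n i) = 1 + (if i = 1 then 1 else 0) := by
    intro i
    unfold fS χ
    by_cases h : i = 1 <;> simp [h]
    · decide
  unfold ψ
  rw [Finset.sum_congr rfl (fun i _ => hchi i), Finset.sum_add_distrib,
    Finset.sum_ite_eq' Finset.univ (1 : ZMod n) (fun _ => (1:ZMod 2)),
    if_pos (Finset.mem_univ _), Finset.sum_const, Finset.card_univ, ZMod.card,
    nsmul_eq_mul, mul_one]

lemma psi_top : ψ n (fun _ => true) = ((n : ℕ) : ZMod 2) := by
  unfold ψ χ
  simp only [if_pos]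
  rw [Finset.sum_const, Finset.card_univ, ZMod.card, nsmul_eq_mul, mul_one]

lemma phi_bot : Φ n (fun _ => false) = 0 := by
  unfold Φ χ
  simp

lemma exists_true_of_phi (f : ZMod n → Bool) (h : Φ n f = 1) : ∃ i, f i = true := by
  by_contra hc
  push_neg at hc
  have : f = fun _ => false := by
    funext i
    cases hf : f i
    · rfl
    · exact absurd hf (hc i)
  rw [this, phi_bot] at h
  exact absurd h (by decide)

lemma exists_false_of_psi (f : ZMod n → Bool) (h : ψ n f = ψ n (fS n)) :
    ∃ i, f i = false := by
  by_contra hc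
  push_neg at hc
  have : f = fun _ => true := by
    funext i
    cases hf : f i
    · exact absurd hf (hc i)
    · rfl
  rw [this, psi_top, psi_fS] at h
  have : (1 : ZMod 2) = 0 := by linear_combination -h
  exact absurd this (by decide)

end Vals
end DLaux

namespace DLaux
section Conn
variable {n : ℕ} [NeZero n]

lemma reach_step {T : Set (Bool ⊕ Bool × ZMod n)} {x y : Bool ⊕ Bool × ZMod n}
    (hx : x ∈ T) (hy : y ∈ T) (h : (dualLobell n).Adj x y) :
    ((dualLobell n).induce T).Reachable ⟨x, hx⟩ ⟨y, hy⟩ := by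
  apply SimpleGraph.Adj.reachable
  simpa using h

lemma connected_of_hub {T : Set (Bool ⊕ Bool × ZMod n)} (h : Bool ⊕ Bool × ZMod n)
    (hh : h ∈ T)
    (H : ∀ x (hx : x ∈ T), ((dualLobell n).induce T).Reachable ⟨x, hx⟩ ⟨h, hh⟩) :
    ((dualLobell n).induce T).Connected := by
  rw [SimpleGraph.connected_iff]
  refine ⟨?_, ⟨⟨h, hh⟩⟩⟩
  rintro ⟨x, hx⟩ ⟨y, hy⟩
  exact (H x hx).trans (H y hy).symm

/-- walk backwards from a `w`-vertex to the apex `v*` in a state `st true f`. -/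
lemma reach_w_aux (hn : 6 ≤ n) (f : ZMod n → Bool) :
    ∀ (s : ℕ) (i : ZMod n) (ht : f (i - (s : ℕ)) = true) (hi : f i = false),
      ((dualLobell n).induce (st n true f)).Reachable
        ⟨Sum.inr (false, i), by simpa using hi⟩
        ⟨Sum.inl true, by simp⟩ := by
  intro s
  induction s with
  | zero =>
      intro i ht hi
      rw [show ((0 : ℕ) : ZMod n) = 0 by norm_cast, sub_zero] at ht
      rw [ht] at hi
      exact absurd hi (by simp)
  | succ s ih =>
      intro i ht hi
      by_cases hp : f (i - 1) = true
      · have st1 : ((dualLobell n).induce (st n true f)).Reachable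
            ⟨Sum.inr (false, i), by simpa using hi⟩
            ⟨Sum.inr (true, i - 1), by simpa using hp⟩ :=
          reach_step _ _ (adj_w_v_pred hn i)
        have st2 : ((dualLobell n).induce (st n true f)).Reachable
            ⟨Sum.inr (true, i - 1), by simpa using hp⟩
            ⟨Sum.inl true, by simp⟩ :=
          reach_step _ _ ((adj_apex_ring true (i - 1)).symm)
        exact st1.trans st2
      · have hp' : f (i - 1) = false := by
          cases hq : f (i - 1)
          · rfl
          · exact absurd hq hp
        have ht' : f ((i - 1) - (s : ℕ)) = true := by
          have : (i - 1) - (s : ℕ) = i - ((s + 1 : ℕ) : ZMod n) := by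
            push_cast
            ring
          rw [this]
          exact ht
        have st1 : ((dualLobell n).induce (st n true f)).Reachable
            ⟨Sum.inr (false, i), by simpa using hi⟩
            ⟨Sum.inr (false, i - 1), by simpa using hp'⟩ := by
          have := adj_ring_succ hn false (i - 1)
          rw [sub_add_cancel] at this
          exact reach_step _ _ this.symm
        exact st1.trans (ih (i - 1) ht' hp')

lemma connected_A (hn : 6 ≤ n) (f : ZMod n → Bool) (hf : ∃ i, f i = true) :
    ((dualLobell n).induce (st n true f)).Connected := by
  apply connected_of_hub (Sum.inl true) (by simp)
  intro x hx
  match x with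
  | .inl c =>
      have : c = true := by simpa using hx
      subst this
      exact SimpleGraph.Reachable.refl _
  | .inr (c, i) =>
      cases c with
      | true =>
          exact reach_step _ _ ((adj_apex_ring true i).symm)
      | false =>
          have hi : f i = false := by simpa using hx
          obtain ⟨i0, hi0⟩ := hf
          apply reach_w_aux hn f ((i - i0).val) i ?_ hi
          rw [ZMod.natCast_zmod_val]
          rw [show i - (i - i0) = i0 by ring]
          exact hi0

/-- walk forwards from a `v`-vertex to the apex `w*` in a state `st false f`. -/
lemma reach_v_aux (hn : 6 ≤ n) (f : ZMod n → Bool) :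
    ∀ (s : ℕ) (i : ZMod n) (ht : f (i + (s : ℕ)) = false) (hi : f i = true),
      ((dualLobell n).induce (st n false f)).Reachable
        ⟨Sum.inr (true, i), by simpa using hi⟩
        ⟨Sum.inl false, by simp⟩ := by
  intro s
  induction s with
  | zero =>
      intro i ht hi
      rw [show ((0 : ℕ) : ZMod n) = 0 by norm_cast, add_zero] at ht
      rw [ht] at hi
      exact absurd hi (by simp)
  | succ s ih =>
      intro i ht hi
      by_cases hp : f (i + 1) = false
      · have hadj : (dualLobell n).Adj (Sum.inr (true, i)) (Sum.inr (false, i + 1)) := by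
          have := adj_w_v_pred hn (i + 1)
          rw [add_sub_cancel_right] at this
          exact this.symm
        have st1 := reach_step (T := st n false f)
            (by simpa using hi) (by simpa using hp) hadj
        have st2 := reach_step (T := st n false f)
            (x := (Sum.inr (false, i + 1) : Bool ⊕ Bool × ZMod n))
            (y := (Sum.inl false : Bool ⊕ Bool × ZMod n))
            (by simpa using hp) (by simp)
            ((adj_apex_ring false (i + 1)).symm)
        exact st1.trans st2
      · have hp' : f (i + 1) = true := by
          cases hq : f (i + 1)
          · exact absurd hq hp
          · rfl
        have ht' : f ((i + 1) + (s : ℕ)) = false := by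
          have : (i + 1) + (s : ℕ) = i + ((s + 1 : ℕ) : ZMod n) := by
            push_cast
            ring
          rw [this]
          exact ht
        have st1 := reach_step (T := st n false f)
            (x := (Sum.inr (true, i) : Bool ⊕ Bool × ZMod n))
            (y := (Sum.inr (true, i + 1) : Bool ⊕ Bool × ZMod n))
            (by simpa using hi) (by simpa using hp')
            (adj_ring_succ hn true i)
        exact st1.trans (ih (i + 1) ht' hp')

lemma connected_B (hn : 6 ≤ n) (f : ZMod n → Bool) (hf : ∃ i, f i = false) :
    ((dualLobell n).induce (st n false f)).Connected := by
  apply connected_of_hub (Sum.inl false) (by simp)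
  intro x hx
  match x with
  | .inl c =>
      have : c = false := by simpa using hx
      subst this
      exact SimpleGraph.Reachable.refl _
  | .inr (c, i) =>
      cases c with
      | false =>
          exact reach_step _ _ ((adj_apex_ring false i).symm)
      | true =>
          have hi : f i = true := by simpa using hx
          obtain ⟨i0, hi0⟩ := hf
          apply reach_v_aux hn f ((i0 - i).val) i ?_ hi
          rw [ZMod.natCast_zmod_val]
          rw [show i + (i0 - i) = i0 by ring]
          exact hi0

end Conn
end DLaux

namespace DLaux
section Final
variable {n : ℕ} [NeZero n]

omit [NeZero n] in
lemma no_near (hn : 6 ≤ n) (i j k : ZMod n)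
    (hj : j = i ∨ j = i + 3) (hk : k = i ∨ k = i + 3)
    (hd : k = j + 1 ∨ k = j - 1 ∨ k = j + 2 ∨ k = j - 2) : False := by
  rcases hj with rfl | rfl
  · rcases hk with h | h
    · rcases hd with h' | h' | h' | h'
      · rw [h] at h'; exact one_ne hn (by linear_combination -h')
      · rw [h] at h'; exact one_ne hn (by linear_combination h')
      · rw [h] at h'; exact two_ne hn (by linear_combination -h')
      · rw [h] at h'; exact two_ne hn (by linear_combination h')
    · rcases hd with h' | h' | h' | h'
      · rw [h] at h'; exact two_ne hn (by linear_combination h')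
      · rw [h] at h'; exact four_ne hn (by linear_combination h')
      · rw [h] at h'; exact one_ne hn (by linear_combination h')
      · rw [h] at h'; exact five_ne hn (by linear_combination h')
  · rcases hk with h | h
    · rcases hd with h' | h' | h' | h'
      · rw [h] at h'; exact four_ne hn (by linear_combination -h')
      · rw [h] at h'; exact two_ne hn (by linear_combination -h')
      · rw [h] at h'; exact five_ne hn (by linear_combination -h')
      · rw [h] at h'; exact one_ne hn (by linear_combination -h')
    · rcases hd with h' | h' | h' | h'
      · rw [h] at h'; exact one_ne hn (by linear_combination -h')
      · rw [h] at h'; exact one_ne hn (by linear_combination h')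
      · rw [h] at h'; exact two_ne hn (by linear_combination -h')
      · rw [h] at h'; exact two_ne hn (by linear_combination h')

omit [NeZero n] in
lemma adj_ring_near {c d : Bool} {j k : ZMod n}
    (h : (dualLobell n).Adj (Sum.inr (d, k)) (Sum.inr (c, j))) :
    k = j + 1 ∨ k = j - 1 ∨ k = j + 2 ∨ k = j - 2 := by
  obtain ⟨-, hrel⟩ := h
  rcases hrel with (⟨-, h1⟩ | ⟨-, -, (h1 | h1)⟩) | (⟨-, h1⟩ | ⟨-, -, (h1 | h1)⟩)
  · right; left; linear_combination -h1
  · right; right; left; linear_combination -h1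
  · left; linear_combination -h1
  · left; exact h1
  · right; right; right; exact h1
  · right; left; exact h1

omit [NeZero n] in
lemma moveSystem (hn : 6 ≤ n) : IsMoveSystem (dualLobell n) (mv n) := by
  intro v
  match v with
  | .inl b =>
      refine ⟨trivial, ?_⟩
      intro u hadj hu
      match u with
      | .inl c => exact adj_no_apex c b hadj
      | .inr (d, k) => exact hu
  | .inr (c, j) =>
      constructor
      · show (Sum.inr (c, j) : Bool ⊕ Bool × ZMod n) ∈ mQ n (sg n j)
        rw [mem_mQ_inr]
        exact sg_cases j
      · intro u hadj hu
        match u with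
        | .inl b => exact hu
        | .inr (d, k) =>
            replace hu : k = sg n j ∨ k = sg n j + 3 := hu
            exact no_near hn (sg n j) j k (sg_cases j) hu (adj_ring_near hadj)

lemma legal_st (hn : 6 ≤ n) (b : Bool) (f : ZMod n → Bool)
    (h1 : ∃ i, f i = true) (h0 : ∃ i, f i = false) :
    Legal (dualLobell n) (st n b f) := by
  have hc := compl_st (n := n) b f
  refine ⟨⟨Sum.inl b, by simp⟩, ⟨Sum.inl (!b), ?_⟩, ?_, ?_⟩
  · rw [hc]; simp
  · cases b
    · exact connected_B hn f h0
    · exact connected_A hn f h1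
  · rw [hc]
    cases b
    · apply connected_A hn
      obtain ⟨i, hi⟩ := h0
      exact ⟨i, by rw [hi]; rfl⟩
    · apply connected_B hn
      obtain ⟨i, hi⟩ := h1
      exact ⟨i, by rw [hi]; rfl⟩

lemma orbit_inv (hn : 6 ≤ n) (T : Set (Bool ⊕ Bool × ZMod n))
    (hT : Reach (mv n) (st n true (fS n)) T) :
    ∃ b f, T = st n b f ∧ Φ n f = 1 ∧ ψ n f = ψ n (fS n) := by
  induction hT with
  | refl => exact ⟨true, fS n, rfl, phi_fS hn, rfl⟩
  | tail _ hstep ih =>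
      obtain ⟨b, f, rfl, hphi, hpsi⟩ := ih
      obtain ⟨v, rfl⟩ := hstep
      match v with
      | .inl c =>
          exact ⟨!b, f, symmDiff_mA b f, hphi, hpsi⟩
      | .inr (c, j) =>
          refine ⟨b, flip2 n (sg n j) f, symmDiff_mQ (sg n j) b f, ?_, ?_⟩
          · rw [phi_sg_flip2 hn]; exact hphi
          · rw [psi_flip2 hn]; exact hpsi

end Final
end DLaux


/-- for every `n ≥ 6`, the dual Löbell graph of degree `n`
admits a legal system. -/
theorem dualLobell_hasLegalSystem (n : ℕ) (hn : 6 ≤ n) :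
    HasLegalSystem (dualLobell n) := by
  haveI : NeZero n := ⟨by omega⟩
  refine ⟨DLaux.mv n, DLaux.st n true (DLaux.fS n), DLaux.moveSystem hn, ?_⟩
  intro T hT
  obtain ⟨b, f, rfl, hphi, hpsi⟩ := DLaux.orbit_inv hn T hT
  exact DLaux.legal_st hn b f (DLaux.exists_true_of_phi f hphi)
    (DLaux.exists_false_of_psi f hpsi)
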